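/- Let N be a positive even integer, let L be an integer with 0 < L < N and ⌈N/L⌉ ≥ 3, set ω = exp(2πi·L/N), and let m1, m2, m3 be pairwise distinct integers with 0 ≤ m_j ≤ ⌈N/L⌉ − 1. Let z, z̃ ∈ ℂ^N be analytic signals whose DFTs satisfy ẑ_{N/2} ≠ 0, ẑ_{N/2−1} ≠ 0, (z̃)^_{N/2} ≠ 0, (z̃)^_{N/2−1} ≠ 0, and |(z̃)^_{N/2}| ≠ |ẑ_{N/2}|. Let w ∈ ℂ^N be an analytic window with ŵ_0·ŵ_1 ≠ 0. If z and z̃ have the same STFT magnitudes at (N/2 − 1, m_j) for j = 1, 2, 3, i.e. |ŷ^w_{N/2−1, m_j}(z̃)| = |ŷ^w_{N/2−1, m_j}(z)| for j = 1, 2, 3, then ((z̃)^_{N/2})² · |ŵ_1|² = (ŵ_0)² · |ẑ_{N/2−1}|². -/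

import Mathlib

open Complex

/-- Discrete Fourier transform of a signal indexed by `ZMod N`. -/
noncomputable def dft {N : ℕ} (z : ZMod N → ℂ) (k : ZMod N) : ℂ :=
  ∑ n ∈ Finset.range N, z n *
    Complex.exp (-2 * (Real.pi : ℂ) * Complex.I * (k.val : ℂ) * (n : ℂ) / N)

/-- Short-time Fourier transform measurement `ŷ^w_{k,m}(z)` with window `w` and
separation parameter `L`. -/
noncomputable def stft {N : ℕ} (w : ZMod N → ℂ) (L : ℤ) (z : ZMod N → ℂ) (k m : ℤ) : ℂ :=
  ∑ n ∈ Finset.range N, z n * w ((m * L - n : ℤ) : ZMod N) *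
    Complex.exp (-2 * (Real.pi : ℂ) * Complex.I * (k : ℂ) * (n : ℂ) / N)

/-- The DFT of the analytic signal associated with a real signal `x`. -/
noncomputable def analyticHat (N : ℕ) (x : ZMod N → ℝ) (k : ℕ) : ℂ :=
  if N % 2 = 0 then
    if k = 0 then dft (fun n => (x n : ℂ)) 0
    else if k ≤ N / 2 - 1 then 2 * dft (fun n => (x n : ℂ)) (k : ZMod N)
    else if k = N / 2 then dft (fun n => (x n : ℂ)) ((N / 2 : ℕ) : ZMod N)
    else 0
  else
    if k = 0 then dft (fun n => (x n : ℂ)) 0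
    else if k ≤ (N - 1) / 2 then 2 * dft (fun n => (x n : ℂ)) (k : ZMod N)
    else 0

/-- The analytic signal `A(x)` of a real signal `x`, obtained by inverse DFT. -/
noncomputable def analyticSignal {N : ℕ} (x : ZMod N → ℝ) : ZMod N → ℂ :=
  fun n => (1 / N : ℂ) * ∑ k ∈ Finset.range N, analyticHat N x k *
    Complex.exp (2 * (Real.pi : ℂ) * Complex.I * (k : ℂ) * (n.val : ℂ) / N)

/-- A signal `z ∈ ℂ^N` is analytic if `z = A(x)` for some real signal `x`. -/
def IsAnalytic {N : ℕ} (z : ZMod N → ℂ) : Prop := ∃ x : ZMod N → ℝ, z = analyticSignal x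

/-! The spectra of analytic signals live on the frequencies `0, …, N/2`, so in the STFT at
frequency `N/2 - 1`, which is a circular convolution of the two spectra, only two products
survive: `N · ŷ^w_{N/2-1,m}(z) = ẑ_{N/2-1} ŵ_0 + ẑ_{N/2} ŵ_1 ω^m`. The points `ω^{m_j}` are three
distinct points of the unit circle, because `|m_j - m_k| L < N`. If `|a + b u| = |c + d u|` at
three such points, the quadratic polynomial `u (|a + b u|² - |c + d u|²)` vanishes identically,
so `|a| |b| = |c| |d|` and `|a|² + |b|² = |c|² + |d|²`, i.e. `{|a|, |b|} = {|c|, |d|}`. The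
assumption `|(z̃)^_{N/2}| ≠ |ẑ_{N/2}|` rules out `|b| = |d|`, leaving
`|(z̃)^_{N/2} ŵ_1| = |ẑ_{N/2-1} ŵ_0|`; since `(z̃)^_{N/2}` and `ŵ_0` are real, squaring gives
the claim. -/

open Finset ComplexConjugate
open scoped ZMod

lemma eq_zero_of_three_roots {R : Type*} [CommRing R] [IsDomain R] {u₁ u₂ u₃ a b c : R}
    (h₁₂ : u₁ ≠ u₂) (h₁₃ : u₁ ≠ u₃) (h₂₃ : u₂ ≠ u₃)
    (e₁ : a * u₁ ^ 2 + b * u₁ + c = 0) (e₂ : a * u₂ ^ 2 + b * u₂ + c = 0)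
    (e₃ : a * u₃ ^ 2 + b * u₃ + c = 0) : a = 0 ∧ b = 0 := by
  have f₁₂ : a * (u₁ + u₂) + b = 0 := (mul_eq_zero.1 (show (u₁ - u₂) * (a * (u₁ + u₂) + b) = 0 by
    linear_combination e₁ - e₂)).resolve_left (sub_ne_zero.2 h₁₂)
  have f₁₃ : a * (u₁ + u₃) + b = 0 := (mul_eq_zero.1 (show (u₁ - u₃) * (a * (u₁ + u₃) + b) = 0 by
    linear_combination e₁ - e₃)).resolve_left (sub_ne_zero.2 h₁₃)
  have ha : a = 0 := (mul_eq_zero.1 (show (u₂ - u₃) * a = 0 by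
    linear_combination f₁₂ - f₁₃)).resolve_left (sub_ne_zero.2 h₂₃)
  exact ⟨ha, by linear_combination f₁₂ - (u₁ + u₂) * ha⟩

lemma eq_and_eq_or_eq_and_eq_of_mul_eq_of_sq_add_sq_eq {a b c d : ℝ} (ha : 0 ≤ a) (hb : 0 ≤ b)
    (hc : 0 ≤ c) (hd : 0 ≤ d) (hmul : a * b = c * d) (hsq : a ^ 2 + b ^ 2 = c ^ 2 + d ^ 2) :
    (a = c ∧ b = d) ∨ (a = d ∧ b = c) := by
  have : (a ^ 2 - c ^ 2) * (a ^ 2 - d ^ 2) = 0 := by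
    linear_combination a ^ 2 * hsq - (a * b + c * d) * hmul
  rcases mul_eq_zero.1 this with h | h
  · obtain rfl := (sq_eq_sq₀ ha hc).1 (sub_eq_zero.1 h)
    exact Or.inl ⟨rfl, (sq_eq_sq₀ hb hd).1 (by linarith)⟩
  · obtain rfl := (sq_eq_sq₀ ha hd).1 (sub_eq_zero.1 h)
    exact Or.inr ⟨rfl, (sq_eq_sq₀ hb hc).1 (by linarith)⟩

lemma mul_norm_sq_add_mul_sub_norm_sq_add_mul {u : ℂ} (hu : ‖u‖ = 1) (a b c d : ℂ) :
    u * ((‖a + b * u‖ ^ 2 - ‖c + d * u‖ ^ 2 : ℝ) : ℂ) =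
      (conj a * b - conj c * d) * u ^ 2 +
        ((‖a‖ ^ 2 + ‖b‖ ^ 2 - ‖c‖ ^ 2 - ‖d‖ ^ 2 : ℝ) : ℂ) * u + (a * conj b - c * conj d) := by
  have hu' : u * conj u = 1 := by rw [Complex.mul_conj', hu]; norm_num
  push_cast
  simp only [← Complex.mul_conj', map_add, map_mul]
  linear_combination (a * conj b - c * conj d + (b * conj b - d * conj d) * u) * hu'

lemma norm_eq_and_norm_eq_or_of_norm_add_mul_eq {a b c d u₁ u₂ u₃ : ℂ}
    (hu₁ : ‖u₁‖ = 1) (hu₂ : ‖u₂‖ = 1) (hu₃ : ‖u₃‖ = 1)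
    (h₁₂ : u₁ ≠ u₂) (h₁₃ : u₁ ≠ u₃) (h₂₃ : u₂ ≠ u₃)
    (e₁ : ‖a + b * u₁‖ = ‖c + d * u₁‖) (e₂ : ‖a + b * u₂‖ = ‖c + d * u₂‖)
    (e₃ : ‖a + b * u₃‖ = ‖c + d * u₃‖) :
    (‖a‖ = ‖c‖ ∧ ‖b‖ = ‖d‖) ∨ (‖a‖ = ‖d‖ ∧ ‖b‖ = ‖c‖) := by
  have key : ∀ {u : ℂ}, ‖u‖ = 1 → ‖a + b * u‖ = ‖c + d * u‖ →
      (conj a * b - conj c * d) * u ^ 2 +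
        ((‖a‖ ^ 2 + ‖b‖ ^ 2 - ‖c‖ ^ 2 - ‖d‖ ^ 2 : ℝ) : ℂ) * u + (a * conj b - c * conj d) = 0 :=
    fun hu e => by
      rw [← mul_norm_sq_add_mul_sub_norm_sq_add_mul hu, e, sub_self, Complex.ofReal_zero, mul_zero]
  obtain ⟨hmul, hsq⟩ :=
    eq_zero_of_three_roots h₁₂ h₁₃ h₂₃ (key hu₁ e₁) (key hu₂ e₂) (key hu₃ e₃)
  refine eq_and_eq_or_eq_and_eq_of_mul_eq_of_sq_add_sq_eq (norm_nonneg a) (norm_nonneg b)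
    (norm_nonneg c) (norm_nonneg d) ?_ (by linarith [Complex.ofReal_eq_zero.1 hsq])
  simpa using congrArg norm (sub_eq_zero.1 hmul)

lemma sq_eq_ofReal_norm_sq_of_conj_eq {r : ℂ} (hr : conj r = r) :
    r ^ 2 = ((‖r‖ ^ 2 : ℝ) : ℂ) := by
  rw [Complex.ofReal_pow, ← Complex.mul_conj', hr, sq]

lemma injOn_intCast_mul_Icc_ceil_div {N : ℕ} {L : ℤ} (hL : 0 < L) :
    Set.InjOn (fun m : ℤ => ((m * L : ℤ) : ZMod N)) (Set.Icc 0 (⌈(N : ℚ) / L⌉ - 1)) := by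
  intro m hm m' hm' h
  have hbound : (⌈(N : ℚ) / L⌉ - 1) * L < N := by
    have hLq : (0 : ℚ) < L := by exact_mod_cast hL
    have : ((⌈(N : ℚ) / L⌉ - 1 : ℤ) : ℚ) * L < N := by
      rw [← lt_div_iff₀ hLq]; push_cast; linarith [Int.ceil_lt_add_one ((N : ℚ) / L)]
    exact_mod_cast this
  have hdvd : (N : ℤ) ∣ m' * L - m * L := (ZMod.intCast_eq_intCast_iff_dvd_sub _ _ _).1 h
  have habs : |m' * L - m * L| < N := by
    rw [abs_lt]
    constructor <;> nlinarith [hm.1, hm.2, hm'.1, hm'.2]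
  exact mul_right_cancel₀ hL.ne' (by linarith [Int.eq_zero_of_abs_lt_dvd hdvd habs])

section
variable {N : ℕ} [NeZero N]

namespace ZMod

lemma sum_range_natCast {M : Type*} [AddCommMonoid M] (f : ZMod N → M) :
    ∑ n ∈ range N, f n = ∑ j, f j := by
  refine sum_nbij' (fun n => (n : ZMod N)) val ?_ ?_ ?_ ?_ ?_
  · simp
  · simp [val_lt]
  · intro n hn
    simp [val_natCast_of_lt (mem_range.1 (mem_coe.1 hn))]
  · simp
  · simp

lemma stdAddChar_mul (j k : ZMod N) :
    stdAddChar (j * k) = exp (2 * Real.pi * I * j.val * k.val / N) := by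
  rw [← natCast_zmod_val j, ← natCast_zmod_val k, ← Nat.cast_mul, ← Int.cast_natCast,
    stdAddChar_coe, val_natCast_of_lt (val_lt j), val_natCast_of_lt (val_lt k)]
  push_cast
  ring_nf

lemma dft_mul_comp_sub (z w : ZMod N → ℂ) (a k : ZMod N) :
    𝓕 (fun j => z j * w (a - j)) k =
      (N : ℂ)⁻¹ * ∑ q, 𝓕 z (q + k) * 𝓕 w q * stdAddChar (q * a) := by
  set ψ : AddChar (ZMod N) ℂ := stdAddChar
  have hchar : ∀ j p q, ψ (-(j * k)) * (ψ (p * j) * ψ (q * (a - j))) =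
      ψ (q * a) * ψ (j * (p - (q + k))) := fun j p q => by
    simp only [← AddChar.map_add_eq_mul]; ring_nf
  have horth : ∀ p q, ∑ j, ψ (j * (p - (q + k))) = if p = q + k then (N : ℂ) else 0 :=
    fun p q => by simp [AddChar.sum_mulShift _ (isPrimitive_stdAddChar N), sub_eq_zero, ψ]
  obtain ⟨Z, rfl⟩ : ∃ Z, z = 𝓕⁻ Z := ⟨𝓕 z, (LinearEquiv.symm_apply_apply _ _).symm⟩
  obtain ⟨W, rfl⟩ : ∃ W, w = 𝓕⁻ W := ⟨𝓕 w, (LinearEquiv.symm_apply_apply _ _).symm⟩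
  simp only [LinearEquiv.apply_symm_apply]
  rw [dft_apply]
  simp only [invDFT_apply, smul_eq_mul]
  calc ∑ j, ψ (-(j * k)) * (((N : ℂ)⁻¹ * ∑ p, ψ (p * j) * Z p) *
          ((N : ℂ)⁻¹ * ∑ q, ψ (q * (a - j)) * W q))
      = (N : ℂ)⁻¹ * (N : ℂ)⁻¹ *
          ∑ q, ∑ p, Z p * W q * ψ (q * a) * ∑ j, ψ (j * (p - (q + k))) := by
        simp only [mul_sum, sum_mul]
        rw [sum_comm]
        refine sum_congr rfl fun q _ => ?_
        rw [sum_comm]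
        refine sum_congr rfl fun p _ => sum_congr rfl fun j _ => ?_
        linear_combination ((N : ℂ)⁻¹ * (N : ℂ)⁻¹ * Z p * W q) * hchar j p q
    _ = _ := by
        simp only [horth, mul_ite, mul_zero, sum_ite_eq', mem_univ, if_true]
        rw [mul_sum, mul_sum]
        refine sum_congr rfl fun q _ => ?_
        field_simp

lemma conj_dft_ofReal_of_neg_eq (x : ZMod N → ℝ) {k : ZMod N} (hk : -k = k) :
    conj (𝓕 (fun j => (x j : ℂ)) k) = 𝓕 (fun j => (x j : ℂ)) k := by
  simp only [dft_apply, smul_eq_mul, map_sum, map_mul, Complex.conj_ofReal,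
    ← AddChar.map_neg_eq_conj, ← mul_neg, hk]

lemma sum_shift_half_sub_one_of_eq_zero_above_half (hN : N % 2 = 0) {Z W : ZMod N → ℂ}
    (hZ : ∀ k : ZMod N, N / 2 < k.val → Z k = 0) (hW : ∀ k : ZMod N, N / 2 < k.val → W k = 0)
    (a : ZMod N) :
    ∑ q, Z (q + ((N / 2 : ℕ) - 1)) * W q * stdAddChar (q * a) =
      Z ((N / 2 : ℕ) - 1) * W 0 + Z (N / 2 : ℕ) * W 1 * stdAddChar a := by
  have : Fact (1 < N) := ⟨by have := NeZero.pos N; omega⟩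
  rw [Fintype.sum_eq_add 0 1 zero_ne_one]
  · simp
  rintro q ⟨hq0, hq1⟩
  by_cases hq : N / 2 < q.val
  · rw [hW q hq, mul_zero, zero_mul]
  have hq2 : 2 ≤ q.val := by
    have h0 : q.val ≠ 0 := by rwa [ne_eq, val_eq_zero]
    have h1 : q.val ≠ 1 := fun h => hq1 (val_injective N (by rw [h, val_one]))
    omega
  have hshift : q + ((N / 2 : ℕ) - 1) = ((q.val + N / 2 - 1 : ℕ) : ZMod N) := by
    rw [Nat.cast_sub (by omega)]
    push_cast
    rw [natCast_zmod_val, add_sub_assoc]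
  rw [hZ _ (by rw [hshift, val_natCast_of_lt (by omega)]; omega), zero_mul, zero_mul]

end ZMod

lemma dft_eq_zmod_dft (z : ZMod N → ℂ) : dft z = 𝓕 z := by
  ext k
  rw [dft, ZMod.dft_apply, ← ZMod.sum_range_natCast]
  refine sum_congr rfl fun n hn => ?_
  rw [smul_eq_mul, mul_comm, AddChar.map_neg_eq_inv, ZMod.stdAddChar_mul, ← Complex.exp_neg,
    ZMod.val_natCast_of_lt (mem_range.1 hn)]
  ring_nf

lemma analyticSignal_eq_invDFT (x : ZMod N → ℝ) :
    analyticSignal x = 𝓕⁻ (fun k => analyticHat N x k.val) := by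
  ext j
  rw [analyticSignal, ZMod.invDFT_apply, ← ZMod.sum_range_natCast, smul_eq_mul, one_div]
  congr 1
  refine sum_congr rfl fun k hk => ?_
  rw [smul_eq_mul, mul_comm, ZMod.val_natCast_of_lt (mem_range.1 hk), ZMod.stdAddChar_mul,
    ZMod.val_natCast_of_lt (mem_range.1 hk)]

lemma stft_eq_dft_mul (w : ZMod N → ℂ) (L : ℤ) (z : ZMod N → ℂ) (k m : ℤ) :
    stft w L z k m = 𝓕 (fun j => z j * w ((m * L : ℤ) - j)) k := by
  rw [stft, ZMod.dft_apply, ← ZMod.sum_range_natCast]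
  refine sum_congr rfl fun n _ => ?_
  rw [smul_eq_mul, mul_comm, show -((n : ZMod N) * k) = ((-(n * k) : ℤ) : ZMod N) by push_cast; ring,
    ZMod.stdAddChar_coe]
  push_cast
  ring_nf

lemma dft_analyticSignal (x : ZMod N → ℝ) (k : ZMod N) :
    dft (analyticSignal x) k = analyticHat N x k.val := by
  rw [dft_eq_zmod_dft, analyticSignal_eq_invDFT, LinearEquiv.apply_symm_apply]

namespace IsAnalytic
variable {z : ZMod N → ℂ}

lemma dft_eq_zero (hz : IsAnalytic z) {k : ZMod N} (hk : N / 2 < k.val) : dft z k = 0 := by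
  obtain ⟨x, rfl⟩ := hz
  rw [dft_analyticSignal, analyticHat]
  split_ifs <;> first | rfl | omega

lemma conj_dft_zero (hz : IsAnalytic z) : conj (dft z 0) = dft z 0 := by
  obtain ⟨x, rfl⟩ := hz
  have h : analyticHat N x 0 = 𝓕 (fun j => (x j : ℂ)) 0 := by simp [analyticHat, dft_eq_zmod_dft]
  rw [dft_analyticSignal, ZMod.val_zero, h, ZMod.conj_dft_ofReal_of_neg_eq x neg_zero]

lemma conj_dft_half (hz : IsAnalytic z) (hN : N % 2 = 0) :
    conj (dft z (N / 2 : ℕ)) = dft z (N / 2 : ℕ) := by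
  obtain ⟨x, rfl⟩ := hz
  have hpos : 0 < N / 2 := by have := NeZero.pos N; omega
  have h : analyticHat N x (N / 2) = 𝓕 (fun j => (x j : ℂ)) (N / 2 : ℕ) := by
    rw [analyticHat, if_pos hN, if_neg hpos.ne', if_neg (by omega), if_pos rfl, dft_eq_zmod_dft]
  have hneg : -((N / 2 : ℕ) : ZMod N) = (N / 2 : ℕ) := by
    rw [neg_eq_iff_add_eq_zero, ← Nat.cast_add, show N / 2 + N / 2 = N by omega,
      ZMod.natCast_self]
  rw [dft_analyticSignal, ZMod.val_natCast_of_lt (by omega), h,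
    ZMod.conj_dft_ofReal_of_neg_eq x hneg]

lemma stft_half_sub_one {w : ZMod N → ℂ} (hz : IsAnalytic z) (hw : IsAnalytic w)
    (hN : N % 2 = 0) (L m : ℤ) :
    stft w L z (((N / 2 : ℕ) : ℤ) - 1) m = (N : ℂ)⁻¹ *
      (dft z ((N / 2 : ℕ) - 1) * dft w 0 +
        dft z (N / 2 : ℕ) * dft w 1 * ZMod.stdAddChar ((m * L : ℤ) : ZMod N)) := by
  rw [stft_eq_dft_mul, ZMod.dft_mul_comp_sub, ← dft_eq_zmod_dft, ← dft_eq_zmod_dft, Int.cast_sub,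
    Int.cast_natCast, Int.cast_one,
    ZMod.sum_shift_half_sub_one_of_eq_zero_above_half hN (fun _ => hz.dft_eq_zero)
      (fun _ => hw.dft_eq_zero)]

end IsAnalytic

end

theorem ambiguity_constraint_analytic_window_general (N : ℕ) (hN : 0 < N) (hEven : N % 2 = 0)
    (L : ℤ) (hL0 : 0 < L)
    (m1 m2 m3 : ℤ)
    (hm1 : 0 ≤ m1) (hm1' : m1 ≤ ⌈(N : ℚ) / (L : ℚ)⌉ - 1)
    (hm2 : 0 ≤ m2) (hm2' : m2 ≤ ⌈(N : ℚ) / (L : ℚ)⌉ - 1)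
    (hm3 : 0 ≤ m3) (hm3' : m3 ≤ ⌈(N : ℚ) / (L : ℚ)⌉ - 1)
    (h12 : m1 ≠ m2) (h13 : m1 ≠ m3) (h23 : m2 ≠ m3)
    (z zt : ZMod N → ℂ) (hz : IsAnalytic z) (hzt : IsAnalytic zt)
    (habs : norm (dft zt ((N / 2 : ℕ) : ZMod N)) ≠
      norm (dft z ((N / 2 : ℕ) : ZMod N)))
    (w : ZMod N → ℂ) (hw : IsAnalytic w) (hw01 : dft w 0 * dft w 1 ≠ 0)
    (hmeas : ∀ m ∈ ({m1, m2, m3} : Set ℤ),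
      norm (stft w L zt (((N / 2 : ℕ) : ℤ) - 1) m) =
        norm (stft w L z (((N / 2 : ℕ) : ℤ) - 1) m)) :
    (dft zt ((N / 2 : ℕ) : ZMod N)) ^ 2 * ((norm (dft w 1) ^ 2 : ℝ) : ℂ) =
      (dft w 0) ^ 2 * ((norm (dft z (((N / 2 : ℕ) : ZMod N) - 1)) ^ 2 : ℝ) : ℂ) := by
  have : NeZero N := ⟨hN.ne'⟩
  set u : ℤ → ℂ := fun m => ZMod.stdAddChar ((m * L : ℤ) : ZMod N)
  have hu_ne {m m' : ℤ} (hm : m ∈ Set.Icc 0 (⌈(N : ℚ) / L⌉ - 1))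
      (hm' : m' ∈ Set.Icc 0 (⌈(N : ℚ) / L⌉ - 1)) (hne : m ≠ m') : u m ≠ u m' := fun h =>
    hne (injOn_intCast_mul_Icc_ceil_div hL0 hm hm' (ZMod.injective_stdAddChar h))
  have hmeas' : ∀ m ∈ ({m1, m2, m3} : Set ℤ),
      ‖dft zt ((N / 2 : ℕ) - 1) * dft w 0 + dft zt (N / 2 : ℕ) * dft w 1 * u m‖ =
        ‖dft z ((N / 2 : ℕ) - 1) * dft w 0 + dft z (N / 2 : ℕ) * dft w 1 * u m‖ := fun m hm => by
    have h := hmeas m hm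
    rw [hzt.stft_half_sub_one hw hEven, hz.stft_half_sub_one hw hEven, norm_mul, norm_mul] at h
    exact mul_left_cancel₀ (by simpa using hN.ne') h
  rcases norm_eq_and_norm_eq_or_of_norm_add_mul_eq (AddChar.norm_apply _ _)
    (AddChar.norm_apply _ _) (AddChar.norm_apply _ _) (hu_ne ⟨hm1, hm1'⟩ ⟨hm2, hm2'⟩ h12)
    (hu_ne ⟨hm1, hm1'⟩ ⟨hm3, hm3'⟩ h13) (hu_ne ⟨hm2, hm2'⟩ ⟨hm3, hm3'⟩ h23)
    (hmeas' m1 (by simp)) (hmeas' m2 (by simp)) (hmeas' m3 (by simp)) with ⟨-, h⟩ | ⟨-, h⟩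
  · rw [norm_mul, norm_mul] at h
    exact absurd (mul_right_cancel₀ (norm_ne_zero_iff.2 (right_ne_zero_of_mul hw01)) h) habs
  · rw [sq_eq_ofReal_norm_sq_of_conj_eq (hzt.conj_dft_half hEven),
      sq_eq_ofReal_norm_sq_of_conj_eq hw.conj_dft_zero, ← Complex.ofReal_mul, ← Complex.ofReal_mul,
      ← mul_pow, ← mul_pow, ← norm_mul, ← norm_mul, h, mul_comm]

/-- Lemma `k` of the paper: if two analytic signals with
`|(z̃)^_{N/2}| ≠ |ẑ_{N/2}|` share the three STFT magnitudes at `(N/2−1, m_j)`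
for an analytic window, then `((z̃)^_{N/2})²·|ŵ_1|² = (ŵ_0)²·|ẑ_{N/2−1}|²`. -/
theorem ambiguity_constraint_analytic_window (N : ℕ) (hN : 0 < N) (hEven : N % 2 = 0)
    (L : ℤ) (hL0 : 0 < L) (hLN : L < (N : ℤ)) (hceil : 3 ≤ ⌈(N : ℚ) / (L : ℚ)⌉)
    (m1 m2 m3 : ℤ)
    (hm1 : 0 ≤ m1) (hm1' : m1 ≤ ⌈(N : ℚ) / (L : ℚ)⌉ - 1)
    (hm2 : 0 ≤ m2) (hm2' : m2 ≤ ⌈(N : ℚ) / (L : ℚ)⌉ - 1)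
    (hm3 : 0 ≤ m3) (hm3' : m3 ≤ ⌈(N : ℚ) / (L : ℚ)⌉ - 1)
    (h12 : m1 ≠ m2) (h13 : m1 ≠ m3) (h23 : m2 ≠ m3)
    (z zt : ZMod N → ℂ) (hz : IsAnalytic z) (hzt : IsAnalytic zt)
    (hz1 : dft z ((N / 2 : ℕ) : ZMod N) ≠ 0)
    (hz2 : dft z (((N / 2 : ℕ) : ZMod N) - 1) ≠ 0)
    (hzt1 : dft zt ((N / 2 : ℕ) : ZMod N) ≠ 0)
    (hzt2 : dft zt (((N / 2 : ℕ) : ZMod N) - 1) ≠ 0)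
    (habs : norm (dft zt ((N / 2 : ℕ) : ZMod N)) ≠
      norm (dft z ((N / 2 : ℕ) : ZMod N)))
    (w : ZMod N → ℂ) (hw : IsAnalytic w) (hw01 : dft w 0 * dft w 1 ≠ 0)
    (hmeas : ∀ m ∈ ({m1, m2, m3} : Set ℤ),
      norm (stft w L zt (((N / 2 : ℕ) : ℤ) - 1) m) =
        norm (stft w L z (((N / 2 : ℕ) : ℤ) - 1) m)) :
    (dft zt ((N / 2 : ℕ) : ZMod N)) ^ 2 * ((norm (dft w 1) ^ 2 : ℝ) : ℂ) =
      (dft w 0) ^ 2 * ((norm (dft z (((N / 2 : ℕ) : ZMod N) - 1)) ^ 2 : ℝ) : ℂ) :=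
  ambiguity_constraint_analytic_window_general N hN hEven L hL0 m1 m2 m3 hm1 hm1' hm2 hm2' hm3 hm3'
    h12 h13 h23 z zt hz hzt habs w hw hw01 hmeas
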